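/- Let P have length m and T have length n ≤ 3m/2, let k ∈ [0,m], and suppose both T[0..m) and T[n−m..n) are k-mismatch occurrences of P. If there is a positive integer d ≥ 2k and a primitive string Q with |Q| ≤ m/(8d) and δ_H(P,Q*) ≤ d, then every position ℓ ∈ Occ^H_k(P,T) is a multiple of |Q|. -/

import Mathlib

open List

variable {α : Type*}

/-- The fragment S[i..j) of a string (list) S. -/
def frag (S : List α) (i j : ℕ) : List α := (S.drop i).take (j - i)

/-- Q^∞[a..b): the fragment of the infinite repetition of Q from a (incl.) to b (excl.). -/
def repPrefix [Inhabited α] (Q : List α) (a b : ℕ) : List α :=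
  (List.range' a (b - a)).map (fun i => Q.getD (i % Q.length) default)

/-- Hamming distance of two strings of the same length (counted over positions of S). -/
def hamming [DecidableEq α] [Inhabited α] (S T : List α) : ℕ :=
  ((Finset.range S.length).filter
    (fun i => S.getD i default ≠ T.getD i default)).card

/-- δ_H(S, Q*): Hamming distance of S to the length-|S| prefix of Q^∞. -/
def hammingStar [DecidableEq α] [Inhabited α] (S Q : List α) : ℕ :=
  hamming S (repPrefix Q 0 S.length)

/-- Cost structure for Levenshtein distance (formerly in Mathlib, `Mathlib.Data.List.EditDistance.Defs`). -/
structure Levenshtein.Cost (α β δ : Type*) where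
  delete : α → δ
  insert : β → δ
  substitute : α → β → δ

/-- Unit costs (formerly Mathlib's `Levenshtein.defaultCost`). -/
def Levenshtein.defaultCost [DecidableEq α] : Levenshtein.Cost α α ℕ where
  delete _ := 1
  insert _ := 1
  substitute a b := if a = b then 0 else 1

/-- Formerly Mathlib's `Levenshtein.impl`. -/
def Levenshtein.impl {β δ : Type*} [AddZeroClass δ] [Min δ] (C : Levenshtein.Cost α β δ)
    (xs : List α) (y : β) (d : {r : List δ // 0 < r.length}) : {r : List δ // 0 < r.length} :=
  let ⟨ds, w⟩ := d
  xs.zip (ds.zip ds.tail) |>.foldr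
    (init := ⟨[ds.getLast (List.length_pos_iff.mp w) + C.insert y], by simp⟩)
    (fun ⟨x, d₀, d₁⟩ ⟨r, w⟩ =>
      ⟨min (C.delete x + r[0]) (min (C.insert y + d₀) (C.substitute x y + d₁)) :: r, by simp⟩)

/-- Formerly Mathlib's `suffixLevenshtein`. -/
def suffixLevenshtein {β δ : Type*} [AddZeroClass δ] [Min δ] (C : Levenshtein.Cost α β δ)
    (xs : List α) (ys : List β) : {r : List δ // 0 < r.length} :=
  ys.foldr
    (Levenshtein.impl C xs)
    (xs.foldr (init := ⟨[0], by simp⟩) (fun a ⟨r, w⟩ => ⟨(C.delete a + r[0]) :: r, by simp⟩))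

/-- Formerly Mathlib's `levenshtein`. -/
def levenshtein {β δ : Type*} [AddZeroClass δ] [Min δ] (C : Levenshtein.Cost α β δ)
    (xs : List α) (ys : List β) : δ :=
  let ⟨r, w⟩ := suffixLevenshtein C xs ys
  r[0]

/-- Edit (Levenshtein) distance. -/
def editDist [DecidableEq α] (S T : List α) : ℕ :=
  levenshtein Levenshtein.defaultCost S T

/-- A string is primitive if it is nonempty and not a proper power of a string. -/
def Primitive (Q : List α) : Prop :=
  Q ≠ [] ∧ ∀ (U : List α) (t : ℕ), 2 ≤ t → Q ≠ (List.replicate t U).flatten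

/-- p is a period of S. -/
def IsPeriod [Inhabited α] (p : ℕ) (S : List α) : Prop :=
  0 < p ∧ ∀ i, i + p < S.length → S.getD i default = S.getD (i + p) default

/-- per(S): the smallest period of S. -/
noncomputable def per [Inhabited α] (S : List α) : ℕ := sInf {p | IsPeriod p S}

/-- Occ^H_k(P,T): starting positions of k-mismatch occurrences of P in T. -/
def occH [DecidableEq α] [Inhabited α] (k : ℕ) (P T : List α) : Finset ℕ :=
  (Finset.range (T.length - P.length + 1)).filter
    (fun i => hamming P (frag T i (i + P.length)) ≤ k)

/-- Exact occurrences of B in T. -/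
def occExact [DecidableEq α] (B T : List α) : Finset ℕ :=
  (Finset.range (T.length + 1)).filter (fun i => frag T i (i + B.length) = B)

/-- Occ^E_k(P,T): starting positions of k-error (edit distance) occurrences of P in T. -/
def occE [DecidableEq α] (k : ℕ) (P T : List α) : Set ℕ :=
  {i | ∃ j, i ≤ j ∧ j ≤ T.length ∧ editDist P (frag T i j) ≤ k}

/-- δ_E^cyc(S,Q): minimum edit distance of S to any substring of Q^∞. -/
noncomputable def edCyc [DecidableEq α] [Inhabited α] (S Q : List α) : ℕ :=
  sInf {d | ∃ i j, i ≤ j ∧ d = editDist S (repPrefix Q i j)}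

/-- δ_E(S,Q*): minimum edit distance of S to a prefix of Q^∞. -/
noncomputable def edStar [DecidableEq α] [Inhabited α] (S Q : List α) : ℕ :=
  sInf {d | ∃ j, d = editDist S (repPrefix Q 0 j)}

/-- Minimum edit distance of T to a substring of Q^∞ starting at position x. -/
noncomputable def edStarAt [DecidableEq α] [Inhabited α] (T Q : List α) (x : ℕ) : ℕ :=
  sInf {d | ∃ j, x ≤ j ∧ d = editDist T (repPrefix Q x j)}

/-- Minimum edit distance of T to a substring of Q^∞ ending at a position ≡ y (mod |Q|). -/
noncomputable def edEndAt [DecidableEq α] [Inhabited α] (T Q : List α) (y : ℕ) : ℕ :=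
  sInf {d | ∃ i j, i ≤ j ∧ j % Q.length = y % Q.length ∧ d = editDist T (repPrefix Q i j)}

/-- Minimum edit distance of L to a substring of Q^∞ ending at a multiple of |Q|. -/
noncomputable def edEndMul [DecidableEq α] [Inhabited α] (L Q : List α) : ℕ :=
  sInf {d | ∃ i j, i ≤ j * Q.length ∧ d = editDist L (repPrefix Q i (j * Q.length))}

/-- The fragment S[i..j) of S is locked with respect to Q. -/
def Locked [DecidableEq α] [Inhabited α] (S Q : List α) (i j : ℕ) : Prop :=
  (∃ a : ℕ, edCyc (frag S i j) Q = editDist (frag S i j) (repPrefix Q 0 (a * Q.length))) ∨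
  (j = S.length ∧ edCyc (frag S i j) Q = edStar (frag S i j) Q) ∨
  (i = 0 ∧ edCyc (frag S i j) Q = edEndMul (frag S i j) Q) ∨
  (i = 0 ∧ j = S.length)

/-- rot^j(Q): rotation moving the last j (mod |Q|) characters to the front. -/
def rotR (Q : List α) (j : ℕ) : List α := Q.rotate (Q.length - j % Q.length)

/-- |Mis(T,Q*) ∩ [a,b)|. -/
def misCount [DecidableEq α] [Inhabited α] (T Q : List α) (a b : ℕ) : ℕ :=
  ((Finset.Ico a b).filter (fun i => i < T.length ∧
     T.getD i default ≠ Q.getD (i % Q.length) default)).card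

/-- μ_j: the total weight of aligned mismatch pairs of P and T against Q^∞ at shift j·|Q|:
a pair (τ = j|Q|+π, π) with π ∈ Mis(P,Q*), τ ∈ Mis(T,Q*) has weight 2 − δ_H(P[π],T[τ]). -/
def mu [DecidableEq α] [Inhabited α] (P T Q : List α) (j : ℕ) : ℕ :=
  ∑ π ∈ Finset.range P.length,
    if P.getD π default ≠ Q.getD (π % Q.length) default ∧
       j * Q.length + π < T.length ∧
       T.getD (j * Q.length + π) default ≠ Q.getD ((j * Q.length + π) % Q.length) default
    then (if P.getD π default = T.getD (j * Q.length + π) default then 2 else 1)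
    else 0

/-! If `ℓ` is a `k`-mismatch occurrence, then both `T[0..m)` and `T[ℓ..ℓ+m)` are within `k + d`
mismatches of `Q^∞`, so `Q^∞` and its shift by `ℓ` disagree at no more than `2k + 2d < 4d`
positions of `[0, m - ℓ)`. If `|Q| ∤ ℓ`, then `Q` differs from its rotation by `ℓ`, because `Q` is
primitive; this gives a disagreement in every block of length `|Q|`, hence at least
`(m - ℓ) / |Q| ≥ 4d` of them, as `ℓ ≤ n - m ≤ m / 2` and `8d|Q| ≤ m`. -/

open scoped Finset

/-- `Q^∞[i]`, the `i`-th letter of the infinite repetition of `Q`. -/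
def periodicExt [Inhabited α] (Q : List α) (i : ℕ) : α :=
  Q.getD (i % Q.length) default

theorem List.exists_eq_flatten_replicate_of_append_comm {A B : List α} (h : A ++ B = B ++ A) :
    ∃ (U : List α) (i j : ℕ), A = (replicate i U).flatten ∧ B = (replicate j U).flatten := by
  induction hn : A.length + B.length using Nat.strong_induction_on generalizing A B with
  | _ n ih =>
  wlog hAB : A.length ≤ B.length generalizing A B
  · obtain ⟨U, i, j, hB, hA⟩ := this h.symm (by omega) (by omega)
    exact ⟨U, j, i, hA, hB⟩
  rcases eq_or_ne A [] with rfl | hA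
  · exact ⟨B, 0, 1, by simp, by simp⟩
  obtain ⟨C, rfl⟩ : A <+: B :=
    prefix_of_prefix_length_le (h ▸ prefix_append A B) (prefix_append B A) hAB
  have hAC : A ++ C = C ++ A := append_cancel_left (h.trans (append_assoc A C A))
  have hlt : A.length + C.length < n := by
    have := length_pos_iff.mpr hA
    rw [← hn, length_append]; omega
  obtain ⟨U, i, j, hA, hC⟩ := ih _ hlt hAC rfl
  exact ⟨U, i, i + j, hA, by rw [hA, hC, replicate_add, flatten_append]⟩

theorem Primitive.dvd_of_rotate_eq {Q : List α} (hQ : Primitive Q) {s : ℕ}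
    (hs : Q.rotate s = Q) : Q.length ∣ s := by
  by_contra hdvd
  have hr : 0 < s % Q.length := Nat.pos_of_ne_zero (mt Nat.dvd_of_mod_eq_zero hdvd)
  have hrq : s % Q.length < Q.length := Nat.mod_lt _ (length_pos_iff.mpr hQ.1)
  rw [← rotate_mod, rotate_eq_drop_append_take hrq.le] at hs
  have hcomm : Q.take (s % Q.length) ++ Q.drop (s % Q.length) =
      Q.drop (s % Q.length) ++ Q.take (s % Q.length) := by
    rw [take_append_drop, hs]
  obtain ⟨U, i, j, hi, hj⟩ := exists_eq_flatten_replicate_of_append_comm hcomm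
  have hi0 : i ≠ 0 := by
    rintro rfl
    simpa [hr.ne', hQ.1] using congrArg length hi
  have hj0 : j ≠ 0 := by
    rintro rfl
    have := congrArg length hj
    simp only [length_drop, replicate_zero, flatten_nil, length_nil] at this
    omega
  refine hQ.2 U (i + j) (by omega) ?_
  rw [← take_append_drop (s % Q.length) Q, hi, hj, replicate_add, flatten_append]

section Periodic

variable [Inhabited α]

theorem periodicExt_add_mul (Q : List α) (i b : ℕ) :
    periodicExt Q (i + b * Q.length) = periodicExt Q i := by
  simp [periodicExt]

theorem Primitive.exists_periodicExt_add_ne {Q : List α} (hQ : Primitive Q) {s : ℕ}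
    (hs : ¬ Q.length ∣ s) : ∃ t < Q.length, periodicExt Q (s + t) ≠ periodicExt Q t := by
  by_contra! h
  refine hs (hQ.dvd_of_rotate_eq (ext_getElem (length_rotate ..) fun t _ ht => ?_))
  have hmod : (t + s) % Q.length < Q.length := Nat.mod_lt _ (length_pos_iff.mpr hQ.1)
  have := h t ht
  rw [periodicExt, periodicExt, add_comm, getD_eq_getElem _ _ hmod, Nat.mod_eq_of_lt ht,
    getD_eq_getElem _ _ ht] at this
  rw [getElem_rotate, this]

theorem Primitive.div_le_card_periodicExt_add_ne [DecidableEq α] {Q : List α}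
    (hQ : Primitive Q) {s : ℕ} (hs : ¬ Q.length ∣ s) (L : ℕ) :
    L / Q.length ≤ #{i ∈ Finset.range L | periodicExt Q (s + i) ≠ periodicExt Q i} := by
  obtain ⟨t, htq, ht⟩ := hQ.exists_periodicExt_add_ne hs
  have hblock : ∀ b < L / Q.length, b * Q.length + t < L := fun b hb =>
    calc b * Q.length + t < (b + 1) * Q.length := by rw [add_mul, one_mul]; omega
      _ ≤ L / Q.length * Q.length := Nat.mul_le_mul_right _ hb
      _ ≤ L := Nat.div_mul_le_self L _
  rw [← Finset.card_range (L / Q.length)]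
  refine Finset.card_le_card_of_injOn (fun b => b * Q.length + t) (fun b hb => ?_)
    fun a _ b _ hab => Nat.eq_of_mul_eq_mul_right (length_pos_iff.mpr hQ.1)
      (Nat.add_right_cancel hab)
  rw [Finset.mem_coe, Finset.mem_range] at hb
  rw [Finset.mem_coe, Finset.mem_filter, Finset.mem_range]
  refine ⟨hblock b hb, ?_⟩
  dsimp only
  rwa [add_comm (b * _), ← add_assoc, periodicExt_add_mul, periodicExt_add_mul]

end Periodic

section Mismatches

variable {ι β : Type*} [DecidableEq β]

theorem Finset.card_filter_ne_comm (s : Finset ι) (f g : ι → β) :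
    #{i ∈ s | f i ≠ g i} = #{i ∈ s | g i ≠ f i} := by
  simp_rw [ne_comm]

theorem Finset.card_filter_ne_le_add [DecidableEq ι] (s : Finset ι) (f g h : ι → β) :
    #{i ∈ s | f i ≠ h i} ≤ #{i ∈ s | f i ≠ g i} + #{i ∈ s | g i ≠ h i} :=
  calc #{i ∈ s | f i ≠ h i} ≤ #{i ∈ s | f i ≠ g i ∨ g i ≠ h i} :=
        card_le_card fun i hi => by
          rw [mem_filter] at hi ⊢
          exact ⟨hi.1, not_and_or.1 fun hfgh => hi.2 (hfgh.1.trans hfgh.2)⟩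
    _ ≤ _ := by rw [filter_or]; exact card_union_le _ _

theorem Finset.card_filter_range_sub_add_le (p : ℕ → Prop) [DecidablePred p] (L s : ℕ) :
    #{i ∈ range (L - s) | p (s + i)} ≤ #{i ∈ range L | p i} :=
  card_le_card_of_injOn (s + ·)
    (fun i hi => by
      simp only [coe_filter, mem_range, Set.mem_ofPred_eq] at hi ⊢
      exact ⟨by omega, hi.2⟩)
    (add_right_injective s).injOn

theorem card_shift_mismatch_le {p t e : ℕ → β} {m ℓ k d : ℕ}
    (h₀ : #{i ∈ Finset.range m | p i ≠ t i} ≤ k)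
    (hℓ : #{i ∈ Finset.range m | p i ≠ t (ℓ + i)} ≤ k)
    (hpe : #{i ∈ Finset.range m | p i ≠ e i} ≤ d) :
    #{i ∈ Finset.range (m - ℓ) | e (ℓ + i) ≠ e i} ≤ 2 * k + 2 * d := by
  have hrange : Finset.range (m - ℓ) ⊆ Finset.range m := Finset.range_subset_range.2 (m.sub_le ℓ)
  have h₁ : #{i ∈ Finset.range (m - ℓ) | e (ℓ + i) ≠ p (ℓ + i)} ≤ d := by
    rw [Finset.card_filter_ne_comm]
    exact (Finset.card_filter_range_sub_add_le (fun i => p i ≠ e i) m ℓ).trans hpe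
  have h₂ : #{i ∈ Finset.range (m - ℓ) | p (ℓ + i) ≠ t (ℓ + i)} ≤ k :=
    (Finset.card_filter_range_sub_add_le (fun i => p i ≠ t i) m ℓ).trans h₀
  have h₃ : #{i ∈ Finset.range (m - ℓ) | t (ℓ + i) ≠ p i} ≤ k := by
    rw [Finset.card_filter_ne_comm]
    exact (Finset.card_le_card (Finset.filter_subset_filter _ hrange)).trans hℓ
  have h₄ : #{i ∈ Finset.range (m - ℓ) | p i ≠ e i} ≤ d :=
    (Finset.card_le_card (Finset.filter_subset_filter _ hrange)).trans hpe
  have := Finset.card_filter_ne_le_add (Finset.range (m - ℓ)) (fun i => e (ℓ + i))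
    (fun i => p (ℓ + i)) e
  have := Finset.card_filter_ne_le_add (Finset.range (m - ℓ)) (fun i => p (ℓ + i))
    (fun i => t (ℓ + i)) e
  have := Finset.card_filter_ne_le_add (Finset.range (m - ℓ)) (fun i => t (ℓ + i)) p e
  omega

end Mismatches

section Strings

theorem getD_frag (S : List α) {i j x : ℕ} (a : α) (hx : x < j - i) :
    (frag S i j).getD x a = S.getD (i + x) a := by
  simp [frag, getD_eq_getElem?_getD, hx]

variable [Inhabited α]

theorem getD_repPrefix (Q : List α) {a b x : ℕ} (hx : x < b - a) :
    (repPrefix Q a b).getD x default = periodicExt Q (a + x) := by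
  simp [repPrefix, periodicExt, hx]

variable [DecidableEq α]

theorem hamming_frag_eq_card (P T : List α) {i j : ℕ} (h : P.length ≤ j - i) :
    hamming P (frag T i j) =
      #{x ∈ Finset.range P.length | P.getD x default ≠ T.getD (i + x) default} := by
  unfold hamming
  congr 1
  refine Finset.filter_congr fun x hx => ?_
  rw [getD_frag _ _ ((Finset.mem_range.1 hx).trans_le h)]

theorem hammingStar_eq_card (P Q : List α) :
    hammingStar P Q = #{x ∈ Finset.range P.length | P.getD x default ≠ periodicExt Q x} := by
  unfold hammingStar hamming
  congr 1
  refine Finset.filter_congr fun x hx => ?_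
  rw [getD_repPrefix _ (by simpa using hx), zero_add]

end Strings

theorem periodic_occ_multiple_general {α : Type*} [DecidableEq α] [Inhabited α]
    (P T Q : List α) (m n k d : ℕ)
    (hP : P.length = m) (hT : T.length = n)
    (hn : 2 * n ≤ 3 * m)
    (hpre : hamming P (frag T 0 m) ≤ k)
    (hd0 : 0 < d) (hd : 2 * k ≤ d)
    (hQ : Primitive Q) (hQlen : 8 * d * Q.length ≤ m)
    (hPQ : hammingStar P Q ≤ d) :
    ∀ ℓ ∈ occH k P T, Q.length ∣ ℓ := by
  subst hP hT
  intro ℓ hℓ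
  rw [occH, Finset.mem_filter, Finset.mem_range, hamming_frag_eq_card P T (by simp)] at hℓ
  rw [hamming_frag_eq_card P T (by simp)] at hpre
  simp only [zero_add] at hpre
  by_contra hdvd
  have hupper := card_shift_mismatch_le (ℓ := ℓ) hpre hℓ.2
    ((hammingStar_eq_card P Q).symm ▸ hPQ)
  have hlower := hQ.div_le_card_periodicExt_add_ne hdvd (P.length - ℓ)
  have hblocks : 4 * d ≤ (P.length - ℓ) / Q.length := by
    rw [Nat.le_div_iff_mul_le (length_pos_iff.mpr hQ.1)]
    rw [mul_assoc] at hQlen ⊢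
    omega
  omega

/-- in the periodic case, every k-mismatch occurrence starts at a multiple of |Q|. -/
theorem periodic_occ_multiple {α : Type*} [DecidableEq α] [Inhabited α]
    (P T Q : List α) (m n k d : ℕ)
    (hP : P.length = m) (hT : T.length = n)
    (hmn : m ≤ n) (hn : 2 * n ≤ 3 * m) (hk : k ≤ m)
    (hpre : hamming P (frag T 0 m) ≤ k) (hsuf : hamming P (frag T (n - m) n) ≤ k)
    (hd0 : 0 < d) (hd : 2 * k ≤ d)
    (hQ : Primitive Q) (hQlen : 8 * d * Q.length ≤ m)
    (hPQ : hammingStar P Q ≤ d) :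
    ∀ ℓ ∈ occH k P T, Q.length ∣ ℓ :=
  periodic_occ_multiple_general P T Q m n k d hP hT hn hpre hd0 hd hQ hQlen hPQ
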